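/- arXiv:1402.3277 — 5 statements merged into one kernel-verified Lean document; each statement's English description precedes it below -/
import Mathlib

section
/- Let S be a finite semigroup and let 𝕋 be a subsemigroup of 2^S that is a pseudo-group. Then there exists a subsemigroup 𝔾 ⊆ 𝕋 that is a group (under the product of 2^S) such that ∪𝔾 = ∪𝕋. -/
open Pointwise

namespace FOSep

/-- First-order formulas over alphabet `A`, with variables indexed by `ℕ`:
atomic formulas are `a(x)` for letters `a` and `x < y`; connectives are
negation, conjunction and existential quantification. -/
inductive Form (A : Type) : Type
  | letter : A → ℕ → Form A
  | lt : ℕ → ℕ → Form A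
  | not : Form A → Form A
  | and : Form A → Form A → Form A
  | ex : ℕ → Form A → Form A

namespace Form

/-- Quantifier rank: maximal nesting depth of quantifiers. -/
def rank {A : Type} : Form A → ℕ
  | letter _ _ => 0
  | lt _ _ => 0
  | not φ => rank φ
  | and φ ψ => max (rank φ) (rank ψ)
  | ex _ φ => rank φ + 1

/-- Free variables of a formula. -/
def freeVars {A : Type} : Form A → Finset ℕ
  | letter _ i => {i}
  | lt i j => {i, j}
  | not φ => freeVars φ
  | and φ ψ => freeVars φ ∪ freeVars ψ
  | ex n φ => freeVars φ \ {n}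

end Form

/-- A sentence is a formula without free variables. -/
def IsSentence {A : Type} (φ : Form A) : Prop := φ.freeVars = ∅

/-- Satisfaction of a formula in a finite word (a list of letters, whose
positions are ordered by `<`), under an assignment of variables to positions. -/
def Interp {A : Type} (w : List A) : Form A → (ℕ → Fin w.length) → Prop
  | .letter a i, v => w.get (v i) = a
  | .lt i j, v => (v i : ℕ) < (v j : ℕ)
  | .not φ, v => ¬ Interp w φ v
  | .and φ ψ, v => Interp w φ v ∧ Interp w ψ v
  | .ex n φ, v => ∃ p : Fin w.length, Interp w φ (Function.update v n p)

/-- The underlying (nonempty) list of letters of a nonempty word. -/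
def wordList {A : Type} (w : FreeSemigroup A) : List A := w.head :: w.tail

/-- A nonempty word satisfies a formula if every assignment satisfies it;
for sentences this is the usual notion of satisfaction. -/
def Models {A : Type} (w : FreeSemigroup A) (φ : Form A) : Prop :=
  ∀ v : ℕ → Fin (wordList w).length, Interp (wordList w) φ v

/-- The language of words of `A⁺` satisfying `φ`. -/
def LangOf {A : Type} (φ : Form A) : Set (FreeSemigroup A) := { w | Models w φ }

/-- A language `L ⊆ A⁺` is FO-definable if it is the language of some sentence. -/
def FODefinable {A : Type} (L : Set (FreeSemigroup A)) : Prop :=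
  ∃ φ : Form A, IsSentence φ ∧ L = LangOf φ

/-- `w ≡_k w'`: the two words satisfy the same sentences of quantifier
rank at most `k`. -/
def EquivK {A : Type} (k : ℕ) (w w' : FreeSemigroup A) : Prop :=
  ∀ φ : Form A, IsSentence φ → φ.rank ≤ k → (Models w φ ↔ Models w' φ)

/-- A finite partition of `X`: finitely many blocks, and every element lies
in exactly one block. -/
def FinPart {X : Type} (P : Set (Set X)) : Prop :=
  P.Finite ∧ ∀ x : X, ∃! B, B ∈ P ∧ x ∈ B

/-- An FO-partition: a finite partition all of whose blocks are FO-definable. -/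
def FOPart {A : Type} (P : Set (Set (FreeSemigroup A))) : Prop :=
  FinPart P ∧ ∀ B ∈ P, FODefinable B

/-- `K` separates `L₀` from `L₁`. -/
def Separates {X : Type} (K L₀ L₁ : Set X) : Prop :=
  L₀ ⊆ K ∧ K ∩ L₁ = ∅

/-- `L₀` and `L₁` are separable by an FO-definable language. -/
def FOSeparable {A : Type} (L₀ L₁ : Set (FreeSemigroup A)) : Prop :=
  ∃ K : Set (FreeSemigroup A), FODefinable K ∧ Separates K L₀ L₁

/-- The imprint of a finite partition `P` on a morphism `α`:
the sets `T ⊆ S` contained in the image of some block. -/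
def imprint {A S : Type} [Semigroup S] (α : FreeSemigroup A →ₙ* S)
    (P : Set (Set (FreeSemigroup A))) : Set (Set S) :=
  { T | ∃ K ∈ P, T ⊆ ⇑α '' K }

/-- The optimal FO-imprint of `α`: the intersection of the imprints of all
FO-partitions. -/
def optImprintFO {A S : Type} [Semigroup S] (α : FreeSemigroup A →ₙ* S) :
    Set (Set S) :=
  { T | ∀ P : Set (Set (FreeSemigroup A)), FOPart P → T ∈ imprint α P }

/-- Powers in a semigroup: `spow x n = x^(n+1)`. -/
def spow {M : Type} [Semigroup M] (x : M) : ℕ → M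
  | 0 => x
  | n + 1 => spow x n * x

/-- `X ⊆ 2^S` contains `𝕊` and is closed under downset, products, and the
FO-operation `T ↦ T^ω ∪ T^(ω+1)` (phrased via idempotent powers: in a finite
semigroup, `T^ω` is the unique idempotent power of `T`). -/
def SatClosed {S : Type} [Semigroup S] (𝕊 X : Set (Set S)) : Prop :=
  𝕊 ⊆ X ∧
  (∀ T ∈ X, ∀ T' : Set S, T' ⊆ T → T' ∈ X) ∧
  (∀ T ∈ X, ∀ T' ∈ X, T * T' ∈ X) ∧
  (∀ T ∈ X, ∀ n : ℕ, spow T n * spow T n = spow T n →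
      spow T n ∪ spow T n * T ∈ X)

/-- `Sat 𝕊`: the smallest subset of `2^S` containing `𝕊` that is closed under
downset, products and the FO-operation. -/
def Sat {S : Type} [Semigroup S] (𝕊 : Set (Set S)) : Set (Set S) :=
  ⋂₀ { X | SatClosed 𝕊 X }

/-- `Sat α = Sat({{α(w)} | w ∈ A⁺})`. -/
def SatM {A S : Type} [Semigroup S] (α : FreeSemigroup A →ₙ* S) : Set (Set S) :=
  Sat { T | ∃ w : FreeSemigroup A, T = {α w} }

/-- Left quotient `w⁻¹L`. -/
def QuotL {A : Type} (w : FreeSemigroup A) (L : Set (FreeSemigroup A)) :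
    Set (FreeSemigroup A) := { u | w * u ∈ L }

/-- Right quotient `Lw⁻¹`. -/
def QuotR {A : Type} (w : FreeSemigroup A) (L : Set (FreeSemigroup A)) :
    Set (FreeSemigroup A) := { u | u * w ∈ L }

/-- A language is regular if it is recognized by a morphism into a finite
semigroup. -/
def Regular {A : Type} (L : Set (FreeSemigroup A)) : Prop :=
  ∃ (S : Type) (_ : Semigroup S) (_ : Fintype S)
    (β : FreeSemigroup A →ₙ* S) (F : Set S), L = ⇑β ⁻¹' F

/-- A class of languages that is nonempty, closed under Boolean operations and
under left/right quotients by words, and contains only regular languages. -/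
def GoodClass {A : Type} (C : Set (Set (FreeSemigroup A))) : Prop :=
  C.Nonempty ∧
  (∀ L ∈ C, ∀ L' ∈ C, L ∪ L' ∈ C) ∧
  (∀ L ∈ C, ∀ L' ∈ C, L ∩ L' ∈ C) ∧
  (∀ L ∈ C, Lᶜ ∈ C) ∧
  (∀ L ∈ C, ∀ w : FreeSemigroup A, QuotL w L ∈ C ∧ QuotR w L ∈ C) ∧
  (∀ L ∈ C, Regular L)

/-- A C-partition: a finite partition all of whose blocks belong to `C`. -/
def CPart {A : Type} (C : Set (Set (FreeSemigroup A)))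
    (P : Set (Set (FreeSemigroup A))) : Prop :=
  FinPart P ∧ ∀ B ∈ P, B ∈ C

/-- The optimal imprint with respect to a class `C`: the intersection of the
imprints of all C-partitions. -/
def optImprint {A S : Type} [Semigroup S] (C : Set (Set (FreeSemigroup A)))
    (α : FreeSemigroup A →ₙ* S) : Set (Set S) :=
  { T | ∀ P : Set (Set (FreeSemigroup A)), CPart C P → T ∈ imprint α P }

/-- A subset of a semigroup that is a subsemigroup and a group under the
induced product. -/
def IsGroupSet {M : Type} [Semigroup M] (G : Set M) : Prop :=
  (∀ x ∈ G, ∀ y ∈ G, x * y ∈ G) ∧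
  ∃ e ∈ G, (∀ x ∈ G, e * x = x ∧ x * e = x) ∧
    ∀ x ∈ G, ∃ y ∈ G, x * y = e ∧ y * x = e

/-- Aperiodicity: `s^ω = s^(ω+1)` for every `s` (phrased via idempotent powers). -/
def Aperiodic (S : Type) [Semigroup S] : Prop :=
  ∀ s : S, ∀ n : ℕ, spow s n * spow s n = spow s n → spow s n = spow s n * s

/-- Green's `H`-equivalence relative to a subsemigroup `X` of `M`
(with witnesses taken in `X`). -/
def HEquivIn {M : Type} [Semigroup M] (X : Set M) (s s' : M) : Prop :=
  s = s' ∨ ((∃ t ∈ X, s * t = s') ∧ (∃ t ∈ X, s' * t = s) ∧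
            (∃ t ∈ X, t * s = s') ∧ (∃ t ∈ X, t * s' = s))

/-- `H` is an `H`-class of the semigroup `X`. -/
def IsHClassIn {M : Type} [Semigroup M] (X : Set M) (H : Set M) : Prop :=
  ∃ s ∈ X, H = { s' ∈ X | HEquivIn X s s' }

/-- Closure conditions for `Sat_G`. -/
def SatGClosed {S : Type} [Semigroup S] (𝕊 X : Set (Set S)) : Prop :=
  𝕊 ⊆ X ∧
  (∀ T ∈ X, ∀ T' : Set S, T' ⊆ T → T' ∈ X) ∧
  (∀ T ∈ X, ∀ T' ∈ X, T * T' ∈ X) ∧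
  (∀ 𝔾 : Set (Set S), 𝔾 ⊆ X → IsGroupSet 𝔾 → ⋃₀ 𝔾 ∈ X)

/-- `Sat_G 𝕊`: the smallest subset of `2^S` containing `𝕊` closed under downset,
products, and unions of groups. -/
def SatG {S : Type} [Semigroup S] (𝕊 : Set (Set S)) : Set (Set S) :=
  ⋂₀ { X | SatGClosed 𝕊 X }

/-- Closure conditions for `Sat_H`. -/
def SatHClosed {S : Type} [Semigroup S] (𝕊 X : Set (Set S)) : Prop :=
  𝕊 ⊆ X ∧
  (∀ T ∈ X, ∀ T' : Set S, T' ⊆ T → T' ∈ X) ∧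
  (∀ T ∈ X, ∀ T' ∈ X, T * T' ∈ X) ∧
  (∀ H : Set (Set S), IsHClassIn X H → ⋃₀ H ∈ X)

/-- `Sat_H 𝕊`: the smallest subset of `2^S` containing `𝕊` closed under downset,
products, and unions of `H`-classes. -/
def SatH {S : Type} [Semigroup S] (𝕊 : Set (Set S)) : Set (Set S) :=
  ⋂₀ { X | SatHClosed 𝕊 X }

/-! ### Infinite words -/

/-- Satisfaction of a formula in an ω-word (a function `ℕ → A`), under an
assignment of variables to positions. -/
def InterpInf {A : Type} (w : ℕ → A) : Form A → (ℕ → ℕ) → Prop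
  | .letter a i, v => w (v i) = a
  | .lt i j, v => v i < v j
  | .not φ, v => ¬ InterpInf w φ v
  | .and φ ψ, v => InterpInf w φ v ∧ InterpInf w ψ v
  | .ex n φ, v => ∃ p : ℕ, InterpInf w φ (Function.update v n p)

/-- An ω-word satisfies a formula if every assignment satisfies it; for
sentences this is the usual notion of satisfaction. -/
def ModelsInf {A : Type} (w : ℕ → A) (φ : Form A) : Prop :=
  ∀ v : ℕ → ℕ, InterpInf w φ v

/-- The ω-language of ω-words satisfying `φ`. -/
def LangOfInf {A : Type} (φ : Form A) : Set (ℕ → A) := { w | ModelsInf w φ }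

/-- An ω-language is FO-definable if it is the ω-language of some sentence. -/
def FODefinableInf {A : Type} (L : Set (ℕ → A)) : Prop :=
  ∃ φ : Form A, IsSentence φ ∧ L = LangOfInf φ

/-- `w ≡_k w'` for ω-words. -/
def EquivKInf {A : Type} (k : ℕ) (w w' : ℕ → A) : Prop :=
  ∀ φ : Form A, IsSentence φ → φ.rank ≤ k → (ModelsInf w φ ↔ ModelsInf w' φ)

/-- An FO-partition of `A^∞`. -/
def FOPartInf {A : Type} (P : Set (Set (ℕ → A))) : Prop :=
  FinPart P ∧ ∀ B ∈ P, FODefinableInf B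

/-- The imprint of a finite partition of `A^∞` on a map `α : A^∞ → Sinf`. -/
def imprintInf {A Sinf : Type} (α : (ℕ → A) → Sinf) (P : Set (Set (ℕ → A))) :
    Set (Set Sinf) :=
  { T | ∃ K ∈ P, T ⊆ α '' K }

/-- A C-partition of `A^∞`. -/
def CPartInf {A : Type} (C : Set (Set (ℕ → A))) (P : Set (Set (ℕ → A))) : Prop :=
  FinPart P ∧ ∀ B ∈ P, B ∈ C

/-- The optimal imprint on `α : A^∞ → Sinf` with respect to a class `C` of
ω-languages. -/
def optImprintInf {A Sinf : Type} (C : Set (Set (ℕ → A))) (α : (ℕ → A) → Sinf) :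
    Set (Set Sinf) :=
  { T | ∀ P : Set (Set (ℕ → A)), CPartInf C P → T ∈ imprintInf α P }

/-- The optimal FO-imprint on `α : A^∞ → Sinf`. -/
def optImprintFOInf {A Sinf : Type} (α : (ℕ → A) → Sinf) : Set (Set Sinf) :=
  { T | ∀ P : Set (Set (ℕ → A)), FOPartInf P → T ∈ imprintInf α P }

/-- Concatenation of a finite word and an ω-word. -/
def catInf {A : Type} (u : FreeSemigroup A) (x : ℕ → A) : ℕ → A :=
  fun n =>
    if h : n < (wordList u).length then (wordList u).get ⟨n, h⟩
    else x (n - (wordList u).length)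


/-!
Choose an idempotent `E ∈ 𝕋` whose local subsemigroup `E𝕋E` is as small as possible. For an
idempotent `F ∈ E𝕋E` we have `F𝕋F ⊆ E𝕋E`, hence equality, hence `F = E`. So the finite monoid
`E𝕋E` has `E` as its only idempotent, which makes it a group. The pseudo-group condition gives
`∪𝕋 = E (∪𝕋) E = ⋃_{T ∈ 𝕋} E T E`, and every `E T E` lies in `E𝕋E`.
-/

section Corner

variable {M : Type} [Semigroup M]

/-- The local subsemigroup `eTe` of `T` at `e`; when `e ∈ T` is idempotent and `T` is
closed under products, it is exactly `{e * t * e | t ∈ T}`. -/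
def corner (T : Set M) (e : M) : Set M :=
  {x | x ∈ T ∧ e * x = x ∧ x * e = x}

theorem corner_subset (T : Set M) (e : M) : corner T e ⊆ T :=
  fun _ hx => hx.1

theorem mul_mem_corner {T : Set M} (hT : ∀ a ∈ T, ∀ b ∈ T, a * b ∈ T) {e x y : M}
    (hx : x ∈ corner T e) (hy : y ∈ corner T e) : x * y ∈ corner T e :=
  ⟨hT x hx.1 y hy.1, by rw [← mul_assoc, hx.2.1], by rw [mul_assoc, hy.2.2]⟩

theorem self_mem_corner {T : Set M} {e : M} (he : e ∈ T) (hee : e * e = e) :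
    e ∈ corner T e :=
  ⟨he, hee, hee⟩

theorem mul_mul_mem_corner {T : Set M} (hT : ∀ a ∈ T, ∀ b ∈ T, a * b ∈ T) {e t : M}
    (he : e ∈ T) (hee : e * e = e) (ht : t ∈ T) : e * t * e ∈ corner T e :=
  ⟨hT _ (hT e he t ht) e he, by rw [← mul_assoc, ← mul_assoc, hee],
    by rw [mul_assoc, hee]⟩

theorem corner_subset_corner {T : Set M} {e f : M} (hf : f ∈ corner T e) :
    corner T f ⊆ corner T e := by
  rintro x ⟨hxT, hfx, hxf⟩
  refine ⟨hxT, ?_, ?_⟩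
  · rw [← hfx, ← mul_assoc, hf.2.1]
  · rw [← hxf, mul_assoc, hf.2.2]

theorem exists_idempotent_mem_of_finite {T : Set M} (hfin : T.Finite) (hne : T.Nonempty)
    (hT : ∀ a ∈ T, ∀ b ∈ T, a * b ∈ T) : ∃ e ∈ T, e * e = e := by
  let _ : TopologicalSpace M := ⊥
  have : DiscreteTopology M := ⟨rfl⟩
  exact exists_idempotent_in_compact_subsemigroup (fun _ => continuous_of_discreteTopology)
    T hne hfin.isCompact hT

theorem eq_of_idempotent_mem_corner {T : Set M} (hfin : T.Finite) {e f : M}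
    (he : e ∈ T) (hee : e * e = e)
    (hmin : ∀ g ∈ T, g * g = g → (corner T e).ncard ≤ (corner T g).ncard)
    (hf : f ∈ corner T e) (hff : f * f = f) : f = e := by
  have heq : corner T f = corner T e :=
    Set.eq_of_subset_of_ncard_le (corner_subset_corner hf) (hmin f hf.1 hff)
      (hfin.subset (corner_subset T e))
  have he' : e ∈ corner T f := heq ▸ self_mem_corner he hee
  rw [← hf.2.2, he'.2.1]

/-- The right ideal `z * eTe` is itself a finite semigroup, so it contains an idempotent,
which must be `e`. -/
theorem exists_mul_eq_of_mem_corner {T : Set M} (hfin : T.Finite)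
    (hT : ∀ a ∈ T, ∀ b ∈ T, a * b ∈ T) {e z : M} (he : e ∈ T) (hee : e * e = e)
    (hmin : ∀ g ∈ T, g * g = g → (corner T e).ncard ≤ (corner T g).ncard)
    (hz : z ∈ corner T e) : ∃ y ∈ corner T e, z * y = e := by
  have hR_fin : ((z * ·) '' corner T e).Finite :=
    (hfin.subset (corner_subset T e)).image _
  have hR_ne : ((z * ·) '' corner T e).Nonempty :=
    ⟨_, Set.mem_image_of_mem _ (self_mem_corner he hee)⟩
  have hR_mul : ∀ a ∈ (z * ·) '' corner T e, ∀ b ∈ (z * ·) '' corner T e,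
      a * b ∈ (z * ·) '' corner T e := by
    rintro _ ⟨a, ha, rfl⟩ _ ⟨b, hb, rfl⟩
    exact ⟨a * z * b, mul_mem_corner hT (mul_mem_corner hT ha hz) hb, by
      simp only [mul_assoc]⟩
  obtain ⟨_, ⟨y, hy, rfl⟩, hidem⟩ := exists_idempotent_mem_of_finite hR_fin hR_ne hR_mul
  exact ⟨y, hy, eq_of_idempotent_mem_corner hfin he hee hmin (mul_mem_corner hT hz hy) hidem⟩

theorem isGroupSet_corner {T : Set M} (hfin : T.Finite)
    (hT : ∀ a ∈ T, ∀ b ∈ T, a * b ∈ T) {e : M} (he : e ∈ T) (hee : e * e = e)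
    (hmin : ∀ g ∈ T, g * g = g → (corner T e).ncard ≤ (corner T g).ncard) :
    IsGroupSet (corner T e) := by
  refine ⟨fun x hx y hy => mul_mem_corner hT hx hy, e, self_mem_corner he hee,
    fun x hx => ⟨hx.2.1, hx.2.2⟩, fun z hz => ?_⟩
  obtain ⟨y, hy, hzy⟩ := exists_mul_eq_of_mem_corner hfin hT he hee hmin hz
  obtain ⟨w, hw, hyw⟩ := exists_mul_eq_of_mem_corner hfin hT he hee hmin hy
  have hwz : w = z :=
    calc w = z * y * w := by rw [hzy, hw.2.1]
      _ = z := by rw [mul_assoc, hyw, hz.2.2]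
  exact ⟨y, hy, hzy, hwz ▸ hyw⟩

theorem exists_isGroupSet_corner {T : Set M} (hfin : T.Finite) (hne : T.Nonempty)
    (hT : ∀ a ∈ T, ∀ b ∈ T, a * b ∈ T) : ∃ e ∈ T, e * e = e ∧ IsGroupSet (corner T e) := by
  obtain ⟨e₀, he₀, he₀e₀⟩ := exists_idempotent_mem_of_finite hfin hne hT
  obtain ⟨e, ⟨he, hee⟩, hmin⟩ := Set.exists_min_image {g | g ∈ T ∧ g * g = g}
    (fun g => (corner T g).ncard) (hfin.subset fun _ hg => hg.1) ⟨e₀, he₀, he₀e₀⟩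
  exact ⟨e, he, hee, isGroupSet_corner hfin hT he hee fun g hg hgg => hmin g ⟨hg, hgg⟩⟩

end Corner

theorem sUnion_corner_eq {S : Type} [Semigroup S] {𝕋 : Set (Set S)}
    (hmul : ∀ T ∈ 𝕋, ∀ T' ∈ 𝕋, T * T' ∈ 𝕋) {E : Set S} (hE : E ∈ 𝕋) (hEE : E * E = E)
    (hleft : ⋃₀ 𝕋 = E * ⋃₀ 𝕋) (hright : ⋃₀ 𝕋 = (⋃₀ 𝕋) * E) :
    ⋃₀ corner 𝕋 E = ⋃₀ 𝕋 := by
  refine (Set.sUnion_mono (corner_subset 𝕋 E)).antisymm fun u hu => ?_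
  have hsandwich : ⋃₀ 𝕋 = ⋃ T ∈ 𝕋, E * T * E := by
    rw [← Set.iUnion₂_mul, ← Set.mul_sUnion, ← hleft, ← hright]
  rw [hsandwich, Set.mem_iUnion₂] at hu
  obtain ⟨T, hT, huT⟩ := hu
  exact ⟨E * T * E, mul_mul_mem_corner hmul hE hEE hT, huT⟩

theorem stmt13 {S : Type} [Semigroup S] [Fintype S] (𝕋 : Set (Set S))
    (hne : 𝕋.Nonempty)
    (hmul : ∀ T ∈ 𝕋, ∀ T' ∈ 𝕋, T * T' ∈ 𝕋)
    (hpg : ∀ T ∈ 𝕋, ⋃₀ 𝕋 = T * ⋃₀ 𝕋 ∧ ⋃₀ 𝕋 = (⋃₀ 𝕋) * T) :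
    ∃ 𝔾 ⊆ 𝕋, IsGroupSet 𝔾 ∧ ⋃₀ 𝔾 = ⋃₀ 𝕋 := by
  obtain ⟨E, hE, hEE, hgroup⟩ := exists_isGroupSet_corner (Set.toFinite 𝕋) hne hmul
  exact ⟨corner 𝕋 E, corner_subset 𝕋 E, hgroup,
    sUnion_corner_eq hmul hE hEE (hpg E hE).1 (hpg E hE).2⟩

end FOSep
end

section
/- Let S be a finite semigroup and 𝕊 a subsemigroup of 2^S. Then Sat(𝕊) = Sat_G(𝕊) = Sat_H(𝕊). -/
open Pointwise

namespace FOSep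

/-!
A group of subsets lies inside a single `H`-class (its identity is `H`-equivalent to each of its
elements), so closure under unions of `H`-classes gives closure under unions of groups; and if
`T^ω` is idempotent, the powers `T^ω T^k` form a cyclic group with identity `T^ω` whose union
contains `T^ω ∪ T^(ω+1)`. This gives `Sat ⊆ Sat_G ⊆ Sat_H`.

Conversely `Sat 𝕊` is closed under unions of its `H`-classes. If `s ≠ t` are `H`-equivalent,
say `s a = t`, `t b = s` and `u s = t`, then `s a^k = u^k s` and `s a^k b^k = s` for all `k`, so
writing `a^ω = a^m`, `s a^ω = u^m s = u^m s a^m b^m = s a^m a^m b^m = s`. Hence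
`F = a^ω ∪ a^(ω+1) ∈ Sat 𝕊` contains `e = a^ω` with `s e = s` and `g = a^(ω+1)` with `s g = t`,
and `e` also fixes every `v s`, i.e. every member of the class. Multiplying `s` by these `F`, one
for each member of the (finite) class, yields an element of `Sat 𝕊` containing the whole class.
-/

section Powers

variable {M : Type} [Semigroup M]

theorem coe_spow (x : M) (n : ℕ) : ((spow x n : M) : WithOne M) = (x : WithOne M) ^ (n + 1) := by
  induction n with
  | zero => simp [spow]
  | succ n ih => rw [spow, WithOne.coe_mul, ih, ← pow_succ]

theorem spow_mem {X : Set M} (hmul : ∀ x ∈ X, ∀ y ∈ X, x * y ∈ X) {x : M} (hx : x ∈ X) :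
    ∀ n, spow x n ∈ X
  | 0 => hx
  | n + 1 => hmul _ (spow_mem hmul hx n) _ hx

theorem isGroupSet_range_spow {x : M} {n : ℕ} (hx : IsIdempotentElem (spow x n)) :
    IsGroupSet (Set.range fun j => spow x (n + j)) := by
  set y : WithOne M := (x : WithOne M)
  have hy : IsIdempotentElem (y ^ (n + 1)) := by
    have := congrArg WithOne.coe hx.eq
    rwa [WithOne.coe_mul, coe_spow] at this
  have hper : ∀ j q, y ^ (n + j + 1 + (n + 1) * (q + 1)) = y ^ (n + j + 1) := fun j q => by
    rw [pow_add, pow_mul, hy.pow_succ_eq, show n + j + 1 = j + (n + 1) by ring, pow_add, mul_assoc,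
      hy.eq]
  have hcoe : ∀ {a b c : ℕ}, y ^ (a + 1) * y ^ (b + 1) = y ^ (c + 1) →
      spow x a * spow x b = spow x c := fun h =>
    WithOne.coe_injective (by rwa [WithOne.coe_mul, coe_spow, coe_spow, coe_spow])
  refine ⟨?_, spow x (n + 0), ⟨0, rfl⟩, ?_, ?_⟩
  · rintro _ ⟨i, rfl⟩ _ ⟨j, rfl⟩
    exact ⟨n + i + j + 1, (hcoe (by rw [← pow_add]; ring_nf)).symm⟩
  · rintro _ ⟨j, rfl⟩
    refine ⟨hcoe ?_, hcoe ?_⟩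
    · rw [← pow_add, ← hper j 0]; ring_nf
    · rw [← pow_add, ← hper j 0]; ring_nf
  · rintro _ ⟨j, rfl⟩
    refine ⟨_, ⟨n * j, rfl⟩, hcoe ?_, hcoe ?_⟩
    · rw [← pow_add, ← hper 0 j]; ring_nf
    · rw [← pow_add, ← hper 0 j]; ring_nf

theorem IsGroupSet.exists_subset_hClass {G X : Set M} (hG : IsGroupSet G) (hGX : G ⊆ X) :
    ∃ e ∈ X, G ⊆ {s ∈ X | HEquivIn X e s} := by
  obtain ⟨-, e, he, hid, hinv⟩ := hG
  refine ⟨e, hGX he, fun g hg => ⟨hGX hg, .inr ?_⟩⟩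
  obtain ⟨y, hy, hgy, hyg⟩ := hinv g hg
  exact ⟨⟨g, hGX hg, (hid g hg).1⟩, ⟨y, hGX hy, hgy⟩, ⟨g, hGX hg, (hid g hg).2⟩,
    ⟨y, hGX hy, hyg⟩⟩

end Powers

section MonoidPowers

variable {N : Type} [Monoid N]

theorem exists_pos_isIdempotentElem_pow [Finite N] (a : N) :
    ∃ m, 0 < m ∧ IsIdempotentElem (a ^ m) := by
  obtain ⟨i, j, hij, hpow⟩ := Set.finite_univ.exists_lt_map_eq_of_forall_mem
    (f := (a ^ · : ℕ → N)) fun _ => Set.mem_univ _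
  obtain ⟨p, rfl⟩ := Nat.exists_eq_add_of_lt hij
  have hper : ∀ c q, a ^ (i + c + (p + 1) * q) = a ^ (i + c) := fun c q => by
    induction q with
    | zero => simp
    | succ q ih =>
      rw [show i + c + (p + 1) * (q + 1) = c + (p + 1) * q + (i + p + 1) by ring, pow_add,
        ← hpow, ← pow_add, show c + (p + 1) * q + i = i + c + (p + 1) * q by ring, ih]
  -- `(p + 1) * (i + 1)`: a multiple of the period `p + 1` beyond the preperiod `i`
  refine ⟨i + (p * (i + 1) + 1), by omega, ?_⟩
  rw [IsIdempotentElem, ← pow_add, ← hper _ (i + 1)]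
  ring_nf

theorem mul_pow_eq_self_of_isIdempotentElem {s a u b : N} (hsa : s * a = u * s)
    (hsab : s * a * b = s) {m : ℕ} (hm : IsIdempotentElem (a ^ m)) : s * a ^ m = s := by
  have hpow : ∀ k, s * a ^ k = u ^ k * s := fun k => by
    induction k with
    | zero => simp
    | succ k ih => rw [pow_succ, ← mul_assoc, ih, mul_assoc, hsa, ← mul_assoc, ← pow_succ]
  have hcancel : ∀ k v, v * s * a ^ k * b ^ k = v * s := fun k => by
    induction k with
    | zero => simp
    | succ k ih =>
      intro v
      calc v * s * a ^ (k + 1) * b ^ (k + 1) = v * (s * a ^ k) * a * b * b ^ k := by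
            rw [pow_succ, pow_succ']; simp only [mul_assoc]
        _ = v * u ^ k * (s * a * b) * b ^ k := by rw [hpow]; simp only [mul_assoc]
        _ = v * s * a ^ k * b ^ k := by rw [hsab, mul_assoc v, ← hpow, ← mul_assoc]
        _ = v * s := ih v
  calc s * a ^ m = u ^ m * s * a ^ m * b ^ m := by rw [hcancel, hpow]
    _ = 1 * s * (a ^ m * a ^ m) * b ^ m := by rw [← hpow]; simp only [one_mul, mul_assoc]
    _ = s := by rw [hm.eq, hcancel, one_mul]

end MonoidPowers

theorem exists_isIdempotentElem_spow_mul_eq_self {M : Type} [Semigroup M] [Finite M]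
    {s a u b : M} (hsa : s * a = u * s) (hsab : s * a * b = s) :
    ∃ n, IsIdempotentElem (spow a n) ∧ s * spow a n = s := by
  have : Finite (WithOne M) := inferInstanceAs (Finite (Option M))
  obtain ⟨m, hm, he⟩ := exists_pos_isIdempotentElem_pow (a : WithOne M)
  obtain ⟨n, rfl⟩ := Nat.exists_eq_add_of_lt hm
  rw [zero_add, ← coe_spow] at he
  refine ⟨n, WithOne.coe_injective (by rw [WithOne.coe_mul]; exact he), WithOne.coe_injective ?_⟩
  rw [WithOne.coe_mul, coe_spow]
  refine mul_pow_eq_self_of_isIdempotentElem (u := (u : WithOne M)) (b := (b : WithOne M)) ?_ ?_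
    (by rwa [← coe_spow])
  · rw [← WithOne.coe_mul, hsa, WithOne.coe_mul]
  · rw [← WithOne.coe_mul, ← WithOne.coe_mul, hsab]

section Saturation

variable {S : Type} [Semigroup S] {𝕊 X : Set (Set S)}

theorem SatGClosed.satClosed (h : SatGClosed 𝕊 X) : SatClosed 𝕊 X := by
  obtain ⟨hsub, hdown, hmul, hgrp⟩ := h
  refine ⟨hsub, hdown, hmul, fun T hT n hn => hdown _ (hgrp _ ?_ (isGroupSet_range_spow hn)) _ ?_⟩
  · rintro _ ⟨j, rfl⟩
    exact spow_mem hmul hT _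
  · rintro y (hy | hy)
    · exact ⟨_, ⟨0, rfl⟩, hy⟩
    · exact ⟨_, ⟨1, rfl⟩, hy⟩

theorem SatHClosed.satGClosed (h : SatHClosed 𝕊 X) : SatGClosed 𝕊 X := by
  obtain ⟨hsub, hdown, hmul, hH⟩ := h
  refine ⟨hsub, hdown, hmul, fun 𝔾 h𝔾X h𝔾 => ?_⟩
  obtain ⟨e, he, h𝔾e⟩ := h𝔾.exists_subset_hClass h𝔾X
  exact hdown _ (hH _ ⟨e, he, rfl⟩) _ (Set.sUnion_subset_sUnion h𝔾e)

theorem satClosed_sat : SatClosed 𝕊 (Sat 𝕊) :=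
  ⟨fun _ hT _ hX => hX.1 hT,
    fun _ hT _ hsub _ hX => hX.2.1 _ (hT _ hX) _ hsub,
    fun _ hT _ hT' _ hX => hX.2.2.1 _ (hT _ hX) _ (hT' _ hX),
    fun _ hT _ hn _ hX => hX.2.2.2 _ (hT _ hX) _ hn⟩

theorem SatClosed.exists_factor_of_hEquivIn [Finite S] (hX : SatClosed 𝕊 X) {s t : Set S}
    (hst : HEquivIn X s t) (hne : s ≠ t) :
    ∃ F ∈ X, ∃ e ⊆ F, ∃ g ⊆ F, s * e = s ∧ s * g = t := by
  obtain ⟨⟨a, ha, hsa⟩, ⟨b, -, htb⟩, ⟨u, -, hus⟩, -⟩ := hst.resolve_left hne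
  obtain ⟨n, hn, hfix⟩ :=
    exists_isIdempotentElem_spow_mul_eq_self (hsa.trans hus.symm) (by rw [hsa, htb])
  exact ⟨_, hX.2.2.2 a ha n hn, _, Set.subset_union_left, _, Set.subset_union_right, hfix,
    by rw [← mul_assoc, hfix, hsa]⟩

theorem exists_mem_forall_subset_of_factor (hmul : ∀ T ∈ X, ∀ T' ∈ X, T * T' ∈ X) {s : Set S}
    (hs : s ∈ X) {H : Set (Set S)} (hH : H.Finite) (hfix : ∀ x ∈ H, ∀ e, s * e = s → x * e = x)
    (hfactor : ∀ t ∈ H, t ≠ s → ∃ F ∈ X, ∃ e ⊆ F, ∃ g ⊆ F, s * e = s ∧ s * g = t) :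
    ∃ P ∈ X, s ⊆ P ∧ ∀ t ∈ H, t ⊆ P := by
  induction H, hH using Set.Finite.induction_on with
  | empty => exact ⟨s, hs, subset_rfl, by simp⟩
  | @insert t H _ _ ih =>
    obtain ⟨P, hP, hsP, hHP⟩ := ih (fun x hx => hfix x (.inr hx))
      (fun t ht => hfactor t (.inr ht))
    by_cases hts : t = s
    · exact ⟨P, hP, hsP, Set.forall_mem_insert.2 ⟨hts ▸ hsP, hHP⟩⟩
    obtain ⟨F, hF, e, heF, g, hgF, hse, hsg⟩ := hfactor t (.inl rfl) hts
    have absorb : ∀ x, x * e = x → x ⊆ P → x ⊆ P * F := fun x hxe hxP => by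
      rw [← hxe]
      exact Set.mul_subset_mul hxP heF
    refine ⟨P * F, hmul _ hP _ hF, absorb s hse hsP, Set.forall_mem_insert.2 ⟨?_, ?_⟩⟩
    · rw [← hsg]
      exact Set.mul_subset_mul hsP hgF
    · exact fun x hx => absorb x (hfix x (.inr hx) e hse) (hHP x hx)

theorem satHClosed_sat [Finite S] : SatHClosed 𝕊 (Sat 𝕊) := by
  have hX := satClosed_sat (𝕊 := 𝕊)
  refine ⟨hX.1, hX.2.1, hX.2.2.1, ?_⟩
  rintro _ ⟨s, hs, rfl⟩
  obtain ⟨P, hP, -, hHP⟩ := exists_mem_forall_subset_of_factor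
    (H := {t ∈ Sat 𝕊 | HEquivIn (Sat 𝕊) s t}) hX.2.2.1 hs (Set.toFinite _)
    (fun x hx e hse => by
      rcases hx.2 with rfl | ⟨-, -, ⟨v, -, rfl⟩, -⟩
      · exact hse
      · rw [mul_assoc, hse])
    (fun t ht hne => hX.exists_factor_of_hEquivIn ht.2 (Ne.symm hne))
  exact hX.2.1 P hP _ (Set.sUnion_subset hHP)

end Saturation

theorem stmt15 {S : Type} [Semigroup S] [Fintype S]
    (𝕊 : Subsemigroup (Set S)) :
    Sat (𝕊 : Set (Set S)) = SatG (𝕊 : Set (Set S)) ∧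
    SatG (𝕊 : Set (Set S)) = SatH (𝕊 : Set (Set S)) := by
  have hG : Sat (𝕊 : Set (Set S)) ⊆ SatG 𝕊 :=
    Set.sInter_subset_sInter fun _ => SatGClosed.satClosed
  have hH : SatG (𝕊 : Set (Set S)) ⊆ SatH 𝕊 :=
    Set.sInter_subset_sInter fun _ => SatHClosed.satGClosed
  have hSat : SatH (𝕊 : Set (Set S)) ⊆ Sat 𝕊 := Set.sInter_subset_of_mem satHClosed_sat
  exact ⟨hG.antisymm (hH.trans hSat), hH.antisymm (hSat.trans hG)⟩

end FOSep
end

section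
/- Let T be a finite semigroup and let H be an H-class of T. Then either H is a singleton, or there exist an element r ∈ T and a subsemigroup G of T that is a group such that H = r·G = {r·g | g ∈ G}. -/
open Pointwise

namespace FOSep

/-
An `H`-class `H` of `s` acts on itself on the right through the stabilizer
`K = {g | s g ∈ H}`, a subsemigroup by Green's lemma. Any idempotent `f ∈ K` acts trivially on
`H`, so `H = s (f K f)`. Choosing `f` with `f K f` as small as possible makes `f K f` a group: for
`g ∈ f K f` the finite subsemigroup `g (f K f)` contains an idempotent `d = g h`, and minimality
forces `d = f`, so every element has a right inverse.
-/

section LocalMonoid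

variable {M : Type} [Semigroup M]

/-- The local monoid `f K f` of a subsemigroup `K` at an idempotent `f ∈ K`. -/
def localMonoid (K : Set M) (f : M) : Set M := {g ∈ K | f * g = g ∧ g * f = g}

theorem exists_idempotent_of_finite {K : Set M} (hK : K.Finite) (hne : K.Nonempty)
    (hmul : ∀ x ∈ K, ∀ y ∈ K, x * y ∈ K) : ∃ f ∈ K, f * f = f := by
  let : TopologicalSpace M := ⊥
  have : DiscreteTopology M := ⟨rfl⟩
  exact exists_idempotent_in_compact_subsemigroup (fun _ => continuous_of_discreteTopology)
    K hne hK.isCompact hmul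

theorem localMonoid_mul_mem {K : Set M} (hmul : ∀ x ∈ K, ∀ y ∈ K, x * y ∈ K) {f x y : M}
    (hx : x ∈ localMonoid K f) (hy : y ∈ localMonoid K f) : x * y ∈ localMonoid K f :=
  ⟨hmul x hx.1 y hy.1, by rw [← mul_assoc, hx.2.1], by rw [mul_assoc, hy.2.2]⟩

theorem localMonoid_subset_localMonoid {K : Set M} {d f : M} (hd : d ∈ localMonoid K f) :
    localMonoid K d ⊆ localMonoid K f := by
  rintro g ⟨hgK, hdg, hgd⟩
  exact ⟨hgK, by rw [← hdg, ← mul_assoc, hd.2.1], by rw [← hgd, mul_assoc, hd.2.2]⟩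

theorem isGroupSet_of_exists_mul_eq {G : Set M} (hmul : ∀ x ∈ G, ∀ y ∈ G, x * y ∈ G)
    {e : M} (he : e ∈ G) (hid : ∀ x ∈ G, e * x = x ∧ x * e = x)
    (hinv : ∀ x ∈ G, ∃ y ∈ G, x * y = e) : IsGroupSet G := by
  refine ⟨hmul, e, he, hid, fun x hx => ?_⟩
  obtain ⟨y, hy, hxy⟩ := hinv x hx
  obtain ⟨z, hz, hyz⟩ := hinv y hy
  have hxz : x = z :=
    calc x = x * (y * z) := by rw [hyz, (hid x hx).2]
      _ = z := by rw [← mul_assoc, hxy, (hid z hz).1]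
  exact ⟨y, hy, hxy, hxz ▸ hyz⟩

theorem exists_isGroupSet_localMonoid {K : Set M} (hK : K.Finite) (hne : K.Nonempty)
    (hmul : ∀ x ∈ K, ∀ y ∈ K, x * y ∈ K) :
    ∃ f ∈ K, f * f = f ∧ IsGroupSet (localMonoid K f) := by
  obtain ⟨f, ⟨hfK, hff⟩, hmin⟩ := Set.exists_min_image {f ∈ K | f * f = f}
    (fun f => (localMonoid K f).ncard) (hK.subset fun _ h => h.1)
    (exists_idempotent_of_finite hK hne hmul)
  have hf : f ∈ localMonoid K f := ⟨hfK, hff, hff⟩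
  refine ⟨f, hfK, hff, isGroupSet_of_exists_mul_eq
    (fun _ hx _ hy => localMonoid_mul_mem hmul hx hy) hf (fun _ hx => hx.2) fun g hg => ?_⟩
  obtain ⟨d, ⟨h, hh, rfl⟩, hdd⟩ := exists_idempotent_of_finite
    ((hK.subset fun _ h => h.1).image (g * ·)) ⟨g * f, f, hf, rfl⟩ <| by
      rintro _ ⟨h, hh, rfl⟩ _ ⟨h', hh', rfl⟩
      exact ⟨h * g * h', localMonoid_mul_mem hmul (localMonoid_mul_mem hmul hh hg) hh',
        by simp only [mul_assoc]⟩
  have hd : g * h ∈ localMonoid K f := localMonoid_mul_mem hmul hg hh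
  have hdf : localMonoid K (g * h) = localMonoid K f :=
    Set.eq_of_subset_of_ncard_le (localMonoid_subset_localMonoid hd)
      (hmin _ ⟨hd.1, hdd⟩) (hK.subset fun _ h => h.1)
  have hfd : f ∈ localMonoid K (g * h) := hdf ▸ hf
  exact ⟨h, hh, hd.2.2.symm.trans hfd.2.1⟩

end LocalMonoid

section HClass

variable {T : Type} [Semigroup T]

def hClass (s : T) : Set T := {s' | HEquivIn (Set.univ : Set T) s s'}

theorem mem_hClass_iff {s x : T} :
    x ∈ hClass s ↔ s = x ∨ ((∃ a, s * a = x) ∧ (∃ a, x * a = s) ∧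
      (∃ b, b * s = x) ∧ (∃ b, b * x = s)) := by
  simp [hClass, HEquivIn]

theorem mem_hClass_self (s : T) : s ∈ hClass s := Or.inl rfl

theorem mul_eq_self_of_mem_hClass {s u x : T} (hsu : s * u = s) (hx : x ∈ hClass s) :
    x * u = x := by
  obtain rfl | ⟨-, -, ⟨b, rfl⟩, -⟩ := mem_hClass_iff.mp hx
  · exact hsu
  · rw [mul_assoc, hsu]

theorem mul_mem_hClass {s x g : T} (hx : x ∈ hClass s) (hg : s * g ∈ hClass s) :
    x * g ∈ hClass s := by
  obtain rfl | ⟨⟨a, rfl⟩, ⟨a', ha'⟩, ⟨b, hb⟩, ⟨b', hb'⟩⟩ := mem_hClass_iff.mp hx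
  · exact hg
  obtain hsg | ⟨-, ⟨t, ht⟩, ⟨t', ht'⟩, ⟨t'', ht''⟩⟩ := mem_hClass_iff.mp hg
  · rwa [mul_eq_self_of_mem_hClass hsg.symm hx]
  refine mem_hClass_iff.mpr (Or.inr ⟨⟨a * g, (mul_assoc _ _ _).symm⟩, ⟨t * a', ?_⟩,
    ⟨b * t', ?_⟩, ⟨t'' * b', ?_⟩⟩)
  · calc s * a * g * (t * a') = b * (s * g * t) * a' := by rw [← hb]; simp only [mul_assoc]
      _ = s := by rw [ht, hb, ha']
  · rw [mul_assoc, ht', ← mul_assoc, hb]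
  · calc t'' * b' * (s * a * g) = t'' * (b' * (s * a) * g) := by simp only [mul_assoc]
      _ = s := by rw [hb', ht'']

def rightStabilizer (s : T) : Set T := {g | s * g ∈ hClass s}

theorem rightStabilizer_mul_mem {s : T} :
    ∀ x ∈ rightStabilizer s, ∀ y ∈ rightStabilizer s, x * y ∈ rightStabilizer s :=
  fun _ hx _ hy => by
    rw [rightStabilizer, Set.mem_ofPred_eq, ← mul_assoc]
    exact mul_mem_hClass hx hy

theorem mul_eq_self_of_idempotent_mem_rightStabilizer {s f : T} (hf : f ∈ rightStabilizer s)
    (hff : f * f = f) : s * f = s := by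
  obtain hsf | ⟨-, ⟨t, ht⟩, -, -⟩ := mem_hClass_iff.mp hf
  · exact hsf.symm
  have hft : s * (f * t) = s := by rw [← mul_assoc, ht]
  calc s * f = s * f * (f * t) := (mul_eq_self_of_mem_hClass hft hf).symm
    _ = s := by rw [mul_assoc s, ← mul_assoc f, hff, ← mul_assoc, ht]

theorem hClass_eq_image_localMonoid {s f : T} (hf : f ∈ rightStabilizer s) (hff : f * f = f) :
    hClass s = (fun g => s * g) '' localMonoid (rightStabilizer s) f := by
  have hsf := mul_eq_self_of_idempotent_mem_rightStabilizer hf hff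
  ext x
  refine ⟨fun hx => ?_, fun ⟨g, hg, hgx⟩ => hgx ▸ hg.1⟩
  obtain ⟨a, rfl⟩ : ∃ a, s * a = x := by
    obtain rfl | ⟨ha, -⟩ := mem_hClass_iff.mp hx
    exacts [⟨f, hsf⟩, ha]
  have hfaf : s * (f * a * f) = s * a := by
    rw [← mul_assoc, ← mul_assoc, hsf, mul_eq_self_of_mem_hClass hsf hx]
  refine ⟨f * a * f, ⟨?_, ?_, ?_⟩, hfaf⟩
  · rwa [rightStabilizer, Set.mem_ofPred_eq, hfaf]
  · rw [← mul_assoc, ← mul_assoc, hff]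
  · rw [mul_assoc, hff]

end HClass

theorem stmt16 {T : Type} [Semigroup T] [Fintype T] (H : Set T)
    (hH : ∃ s : T, H = { s' | HEquivIn (Set.univ : Set T) s s' }) :
    (∃ x : T, H = {x}) ∨
      ∃ (r : T) (G : Set T), IsGroupSet G ∧ H = (fun g => r * g) '' G := by
  obtain ⟨s, rfl⟩ := hH
  change (∃ x, hClass s = {x}) ∨ ∃ r G, IsGroupSet G ∧ hClass s = (fun g => r * g) '' G
  by_cases hsingle : ∀ x ∈ hClass s, x = s
  · exact Or.inl ⟨s, Set.eq_singleton_iff_unique_mem.mpr ⟨mem_hClass_self s, hsingle⟩⟩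
  push Not at hsingle
  obtain ⟨x, hx, hxs⟩ := hsingle
  obtain ⟨a, rfl⟩ : ∃ a, s * a = x := by
    obtain hsx | ⟨ha, -⟩ := mem_hClass_iff.mp hx
    exacts [absurd hsx.symm hxs, ha]
  obtain ⟨f, hf, hff, hgroup⟩ := exists_isGroupSet_localMonoid (Set.toFinite _)
    ⟨a, hx⟩ rightStabilizer_mul_mem
  exact Or.inr ⟨s, _, hgroup, hClass_eq_image_localMonoid hf hff⟩

end FOSep
end

section
/- Let A be a finite alphabet, S_∞ a finite set, α_∞: A^∞ → S_∞ a map, and let C be a class of ω-languages over A that is nonempty and closed under Boolean operations (finite unions, intersections, and complement within A^∞). Let L₁ = α_∞⁻¹(T₁) and L₂ = α_∞⁻¹(T₂) for T₁, T₂ ⊆ S_∞. Then the following are equivalent: (1) L₁ and L₂ are C-separable (some K ∈ C satisfies L₁ ⊆ K and K ∩ L₂ = ∅); (2) for all t₁ ∈ T₁ and t₂ ∈ T₂, {t₁, t₂} ∉ I_C[α_∞]; (3) for every C-partition 𝐊 of A^∞ that is optimal for α_∞, L₁ and L₂ can be separated by a union of blocks of 𝐊. -/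
open Pointwise

namespace FOSep

/-
The pair sets `{t₁, t₂}` with `t₁ ∈ T₁`, `t₂ ∈ T₂` missing from the imprint of a finite
partition `P` are exactly what is needed for a union of blocks of `P` to separate
`α⁻¹(T₁)` from `α⁻¹(T₂)`: take the blocks whose image meets `T₁`. Since `S_∞` is finite there
are finitely many imprints, and as the common refinement of two `C`-partitions is a
`C`-partition whose imprint lies in both, a partition with minimal imprint is optimal and its
imprint is `I_C[α_∞]`. A separator `K ∈ C` yields the `C`-partition `{K, Kᶜ}`; conversely the
chosen union of blocks of an optimal partition is a finite union of members of `C`.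
-/

theorem FinPart.image2_inter {X : Type} {P P' : Set (Set X)} (hP : FinPart P)
    (hP' : FinPart P') : FinPart (Set.image2 (· ∩ ·) P P') := by
  refine ⟨hP.1.image2 _ hP'.1, fun x => ?_⟩
  obtain ⟨B, ⟨hB, hxB⟩, huniq⟩ := hP.2 x
  obtain ⟨B', ⟨hB', hxB'⟩, huniq'⟩ := hP'.2 x
  refine ⟨B ∩ B', ⟨Set.mem_image2_of_mem hB hB', hxB, hxB'⟩, ?_⟩
  rintro _ ⟨⟨D, hD, D', hD', rfl⟩, hxD, hxD'⟩
  rw [huniq D ⟨hD, hxD⟩, huniq' D' ⟨hD', hxD'⟩]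

theorem finPart_pair_compl {X : Type} (K : Set X) : FinPart {K, Kᶜ} := by
  refine ⟨Set.toFinite _, fun x => ?_⟩
  by_cases hx : x ∈ K
  · refine ⟨K, ⟨Set.mem_insert _ _, hx⟩, ?_⟩
    rintro B ⟨rfl | rfl, hxB⟩
    exacts [rfl, absurd hx hxB]
  · refine ⟨Kᶜ, ⟨Set.mem_insert_of_mem _ rfl, hx⟩, ?_⟩
    rintro B ⟨rfl | rfl, hxB⟩
    exacts [absurd hxB hx, rfl]

theorem sUnion_mem_of_finite {X : Type} {C : Set (Set X)} (hempty : ∅ ∈ C)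
    (hunion : ∀ L ∈ C, ∀ L' ∈ C, L ∪ L' ∈ C) {Q : Set (Set X)} (hQ : Q.Finite)
    (hQC : Q ⊆ C) : ⋃₀ Q ∈ C := by
  induction Q, hQ using Set.Finite.induction_on with
  | empty => simpa using hempty
  | @insert B Q _ _ ih =>
    rw [Set.sUnion_insert]
    exact hunion B (hQC (Set.mem_insert _ _)) _ (ih ((Set.subset_insert _ _).trans hQC))

section Imprint

variable {A Sinf : Type}

def IsOptimalCPartInf (C : Set (Set (ℕ → A))) (α : (ℕ → A) → Sinf)
    (P : Set (Set (ℕ → A))) : Prop :=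
  CPartInf C P ∧ ∀ P' : Set (Set (ℕ → A)), CPartInf C P' → imprintInf α P ⊆ imprintInf α P'

theorem imprintInf_image2_inter_subset_left (α : (ℕ → A) → Sinf) (P P' : Set (Set (ℕ → A))) :
    imprintInf α (Set.image2 (· ∩ ·) P P') ⊆ imprintInf α P := by
  rintro T ⟨_, ⟨B, hB, B', -, rfl⟩, hT⟩
  exact ⟨B, hB, hT.trans (Set.image_mono Set.inter_subset_left)⟩

theorem imprintInf_image2_inter_subset_right (α : (ℕ → A) → Sinf) (P P' : Set (Set (ℕ → A))) :
    imprintInf α (Set.image2 (· ∩ ·) P P') ⊆ imprintInf α P' := by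
  rintro T ⟨_, ⟨B, -, B', hB', rfl⟩, hT⟩
  exact ⟨B', hB', hT.trans (Set.image_mono Set.inter_subset_right)⟩

theorem exists_isOptimalCPartInf [Finite Sinf] {C : Set (Set (ℕ → A))} (huniv : Set.univ ∈ C)
    (hinter : ∀ L ∈ C, ∀ L' ∈ C, L ∩ L' ∈ C) (α : (ℕ → A) → Sinf) :
    ∃ P, IsOptimalCPartInf C α P := by
  have hunivPart : CPartInf C {Set.univ} :=
    ⟨⟨Set.finite_singleton _, fun x => ⟨Set.univ, ⟨rfl, trivial⟩, fun _ h => h.1⟩⟩,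
      fun _ hB => hB ▸ huniv⟩
  obtain ⟨_, ⟨P, hP, rfl⟩, hmin⟩ := exists_minimal_of_wellFoundedLT
    (fun I : Set (Set Sinf) => ∃ P, CPartInf C P ∧ imprintInf α P = I) ⟨_, _, hunivPart, rfl⟩
  refine ⟨P, hP, fun P' hP' => ?_⟩
  have hRefine : CPartInf C (Set.image2 (· ∩ ·) P P') :=
    ⟨hP.1.image2_inter hP'.1, by
      rintro _ ⟨B, hB, B', hB', rfl⟩
      exact hinter B (hP.2 B hB) B' (hP'.2 B' hB')⟩
  calc imprintInf α P ⊆ imprintInf α (Set.image2 (· ∩ ·) P P') :=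
        hmin ⟨_, hRefine, rfl⟩ (imprintInf_image2_inter_subset_left α P P')
    _ ⊆ imprintInf α P' := imprintInf_image2_inter_subset_right α P P'

theorem IsOptimalCPartInf.imprintInf_eq {C : Set (Set (ℕ → A))} {α : (ℕ → A) → Sinf}
    {P : Set (Set (ℕ → A))} (hP : IsOptimalCPartInf C α P) :
    imprintInf α P = optImprintInf C α :=
  Set.Subset.antisymm (fun _ hT P' hP' => hP.2 P' hP' hT) (fun _ hT => hT P hP.1)

theorem FinPart.exists_sUnion_separates_iff {P : Set (Set (ℕ → A))} (hP : FinPart P)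
    (α : (ℕ → A) → Sinf) (T₁ T₂ : Set Sinf) :
    (∃ Q ⊆ P, Separates (⋃₀ Q) (α ⁻¹' T₁) (α ⁻¹' T₂)) ↔
      ∀ t₁ ∈ T₁, ∀ t₂ ∈ T₂, ({t₁, t₂} : Set Sinf) ∉ imprintInf α P := by
  constructor
  · rintro ⟨Q, hQP, hsub, hdisj⟩ t₁ ht₁ t₂ ht₂ ⟨B, hB, hpair⟩
    obtain ⟨⟨w₁, hw₁, rfl⟩, ⟨w₂, hw₂, rfl⟩⟩ := Set.pair_subset_iff.1 hpair
    obtain ⟨B', hB'Q, hw₁B'⟩ := hsub ht₁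
    obtain ⟨D, -, huniq⟩ := hP.2 w₁
    have hBQ : B ∈ Q := by
      rwa [huniq B ⟨hB, hw₁⟩, ← huniq B' ⟨hQP hB'Q, hw₁B'⟩]
    exact hdisj.subset ⟨⟨B, hBQ, hw₂⟩, ht₂⟩
  · intro h
    refine ⟨{B ∈ P | (α '' B ∩ T₁).Nonempty}, Set.sep_subset _ _, fun w hw => ?_, ?_⟩
    · obtain ⟨B, ⟨hB, hwB⟩, -⟩ := hP.2 w
      exact ⟨B, ⟨hB, α w, ⟨w, hwB, rfl⟩, hw⟩, hwB⟩
    · refine Set.eq_empty_of_forall_notMem ?_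
      rintro w ⟨⟨B, ⟨hB, _, ⟨w₁, hw₁, rfl⟩, ht₁⟩, hwB⟩, ht₂⟩
      exact h _ ht₁ _ ht₂ ⟨B, hB, Set.pair_subset_iff.2 ⟨⟨w₁, hw₁, rfl⟩, ⟨w, hwB, rfl⟩⟩⟩

end Imprint

theorem stmt17_general {A Sinf : Type} [Fintype Sinf]
    (C : Set (Set (ℕ → A)))
    (hne : C.Nonempty)
    (hunion : ∀ L ∈ C, ∀ L' ∈ C, L ∪ L' ∈ C)
    (hinter : ∀ L ∈ C, ∀ L' ∈ C, L ∩ L' ∈ C)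
    (hcompl : ∀ L ∈ C, Lᶜ ∈ C)
    (α : (ℕ → A) → Sinf) (T₁ T₂ : Set Sinf) :
    ((∃ K ∈ C, Separates K (α ⁻¹' T₁) (α ⁻¹' T₂)) ↔
        ∀ t₁ ∈ T₁, ∀ t₂ ∈ T₂, ({t₁, t₂} : Set Sinf) ∉ optImprintInf C α) ∧
    ((∀ t₁ ∈ T₁, ∀ t₂ ∈ T₂, ({t₁, t₂} : Set Sinf) ∉ optImprintInf C α) ↔
        ∀ P : Set (Set (ℕ → A)), CPartInf C P →
          (∀ P' : Set (Set (ℕ → A)), CPartInf C P' →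
            imprintInf α P ⊆ imprintInf α P') →
          ∃ Q ⊆ P, Separates (⋃₀ Q) (α ⁻¹' T₁) (α ⁻¹' T₂)) := by
  obtain ⟨L, hL⟩ := hne
  have huniv : Set.univ ∈ C := by simpa using hunion L hL Lᶜ (hcompl L hL)
  have hempty : ∅ ∈ C := by simpa using hcompl _ huniv
  have hoptimal : ∀ P, IsOptimalCPartInf C α P →
      ((∀ t₁ ∈ T₁, ∀ t₂ ∈ T₂, ({t₁, t₂} : Set Sinf) ∉ optImprintInf C α) ↔
        ∃ Q ⊆ P, Separates (⋃₀ Q) (α ⁻¹' T₁) (α ⁻¹' T₂)) := fun P hP => by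
    rw [← hP.imprintInf_eq, hP.1.1.exists_sUnion_separates_iff]
  obtain ⟨P₀, hP₀⟩ := exists_isOptimalCPartInf huniv hinter α
  refine ⟨⟨?_, fun h => ?_⟩, fun h P hP hPopt => (hoptimal P ⟨hP, hPopt⟩).1 h,
    fun h => (hoptimal P₀ hP₀).2 (h P₀ hP₀.1 hP₀.2)⟩
  · rintro ⟨K, hK, hsep⟩ t₁ ht₁ t₂ ht₂ hpair
    have hKpart : CPartInf C {K, Kᶜ} :=
      ⟨finPart_pair_compl K, by rintro B (rfl | rfl); exacts [hK, hcompl K hK]⟩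
    exact ((finPart_pair_compl K).exists_sUnion_separates_iff α T₁ T₂).1
      ⟨{K}, by simp, by simpa using hsep⟩ t₁ ht₁ t₂ ht₂ (hpair _ hKpart)
  · obtain ⟨Q, hQP, hsep⟩ := (hoptimal P₀ hP₀).1 h
    exact ⟨⋃₀ Q, sUnion_mem_of_finite hempty hunion (hP₀.1.1.1.subset hQP)
      (hQP.trans hP₀.1.2), hsep⟩

theorem stmt17 {A Sinf : Type} [Fintype A] [Fintype Sinf]
    (C : Set (Set (ℕ → A)))
    (hne : C.Nonempty)
    (hunion : ∀ L ∈ C, ∀ L' ∈ C, L ∪ L' ∈ C)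
    (hinter : ∀ L ∈ C, ∀ L' ∈ C, L ∩ L' ∈ C)
    (hcompl : ∀ L ∈ C, Lᶜ ∈ C)
    (α : (ℕ → A) → Sinf) (T₁ T₂ : Set Sinf) :
    ((∃ K ∈ C, Separates K (α ⁻¹' T₁) (α ⁻¹' T₂)) ↔
        ∀ t₁ ∈ T₁, ∀ t₂ ∈ T₂, ({t₁, t₂} : Set Sinf) ∉ optImprintInf C α) ∧
    ((∀ t₁ ∈ T₁, ∀ t₂ ∈ T₂, ({t₁, t₂} : Set Sinf) ∉ optImprintInf C α) ↔
        ∀ P : Set (Set (ℕ → A)), CPartInf C P →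
          (∀ P' : Set (Set (ℕ → A)), CPartInf C P' →
            imprintInf α P ⊆ imprintInf α P') →
          ∃ Q ⊆ P, Separates (⋃₀ Q) (α ⁻¹' T₁) (α ⁻¹' T₂)) :=
  stmt17_general C hne hunion hinter hcompl α T₁ T₂

end FOSep
end

section
/- Let A be a finite alphabet, S_∞ a finite set, α_∞: A^∞ → S_∞ a map, and T ⊆ S_∞. Then T belongs to the optimal FO-imprint I[α_∞] if and only if for every k ∈ ℕ there exists an equivalence class W ⊆ A^∞ of the relation ≡_k on ω-words such that T ⊆ α_∞(W). -/
open Pointwise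

namespace FOSep

/-! Both directions compare FO-partitions with the partition of `A^∞` into `≡_k`-classes.
The blocks of an FO-partition are defined by finitely many sentences, all of rank at most some `k`,
so each `≡_k`-class lies inside a block. Conversely `≡_k` has finite index, so each class is a
finite Boolean combination of sentences of rank `≤ k` and the classes form an FO-partition.
Finite index comes from Ehrenfeucht–Fraïssé types: the rank-`r` type of a tuple of `m` positions
ranges over a finite set and decides every formula of rank `≤ r` with free variables sent to the
tuple, as long as (number of free variables) + rank `≤ m`, because each quantifier can take over a
slot that no free variable uses. -/

theorem exists_congr_of_range_eq {α β γ : Type*} {f : α → γ} {g : β → γ} {P : α → Prop}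
    {Q : β → Prop} (h : Set.range f = Set.range g) (hPQ : ∀ a b, f a = g b → (P a ↔ Q b)) :
    (∃ a, P a) ↔ ∃ b, Q b := by
  constructor
  · rintro ⟨a, ha⟩
    obtain ⟨b, hb⟩ : f a ∈ Set.range g := h ▸ Set.mem_range_self a
    exact ⟨b, (hPQ a b hb.symm).mp ha⟩
  · rintro ⟨b, hb⟩
    obtain ⟨a, ha⟩ : g b ∈ Set.range f := h ▸ Set.mem_range_self b
    exact ⟨a, (hPQ a b ha).mpr hb⟩

theorem finite_of_forall_saturated {X Y : Type*} [Finite Y] (g : X → Y) {𝒮 : Set (Set X)}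
    (h𝒮 : ∀ s ∈ 𝒮, ∀ x y, g x = g y → x ∈ s → y ∈ s) : 𝒮.Finite :=
  (Set.finite_range fun t : Set Y => g ⁻¹' t).subset fun s hs =>
    ⟨g '' s, Set.ext fun y => ⟨fun ⟨x, hx, hxy⟩ => h𝒮 s hs x y hxy hx, fun hy => ⟨y, hy, rfl⟩⟩⟩

section Definability

variable {A : Type}

theorem interpInf_congr (w : ℕ → A) (φ : Form A) {v v' : ℕ → ℕ}
    (h : ∀ i ∈ φ.freeVars, v i = v' i) : InterpInf w φ v ↔ InterpInf w φ v' := by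
  induction φ generalizing v v' with
  | letter a i => simp only [InterpInf, h i (by simp [Form.freeVars])]
  | lt i j =>
    simp only [InterpInf, h i (by simp [Form.freeVars]), h j (by simp [Form.freeVars])]
  | not φ ih => exact not_congr (ih h)
  | and φ ψ ihφ ihψ =>
    exact and_congr (ihφ fun i hi => h i (by simp [Form.freeVars, hi]))
      (ihψ fun i hi => h i (by simp [Form.freeVars, hi]))
  | ex n φ ih =>
    refine exists_congr fun p => ih fun i hi => ?_
    by_cases hin : i = n
    · simp [hin]
    · simpa [hin] using h i (by simp [Form.freeVars, hi, hin])

theorem IsSentence.modelsInf_iff {φ : Form A} (hφ : IsSentence φ) (w : ℕ → A) (v : ℕ → ℕ) :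
    ModelsInf w φ ↔ InterpInf w φ v :=
  ⟨fun h => h v, fun h v' =>
    (interpInf_congr w φ fun i hi => by simp [show φ.freeVars = ∅ from hφ] at hi).mp h⟩

theorem FODefinableInf.univ : FODefinableInf (Set.univ : Set (ℕ → A)) :=
  ⟨.not (.ex 0 (.lt 0 0)), by simp [IsSentence, Form.freeVars], by
    ext w; simp [LangOfInf, ModelsInf, InterpInf]⟩

theorem FODefinableInf.compl {L : Set (ℕ → A)} (hL : FODefinableInf L) :
    FODefinableInf Lᶜ := by
  obtain ⟨φ, hφ, rfl⟩ := hL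
  refine ⟨.not φ, hφ, Set.ext fun w => ?_⟩
  simp only [Set.mem_compl_iff, LangOfInf, Set.mem_ofPred_eq,
    hφ.modelsInf_iff w 0, (show IsSentence (.not φ) from hφ).modelsInf_iff w 0, InterpInf]

theorem FODefinableInf.inter {L L' : Set (ℕ → A)} (hL : FODefinableInf L)
    (hL' : FODefinableInf L') : FODefinableInf (L ∩ L') := by
  obtain ⟨φ, hφ, rfl⟩ := hL
  obtain ⟨ψ, hψ, rfl⟩ := hL'
  refine ⟨.and φ ψ, ?_, Set.ext fun w => ?_⟩
  · simp [IsSentence, Form.freeVars, show φ.freeVars = ∅ from hφ,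
      show ψ.freeVars = ∅ from hψ]
  · simp only [Set.mem_inter_iff, LangOfInf, Set.mem_ofPred_eq, ModelsInf, InterpInf, forall_and]

theorem FODefinableInf.biInter {ι : Type*} {s : Set ι} (hs : s.Finite) {f : ι → Set (ℕ → A)}
    (hf : ∀ i ∈ s, FODefinableInf (f i)) : FODefinableInf (⋂ i ∈ s, f i) := by
  induction s, hs using Set.Finite.induction_on with
  | empty => simpa using FODefinableInf.univ
  | insert _ _ ih =>
    rw [Set.biInter_insert]
    exact (hf _ (Set.mem_insert _ _)).inter (ih fun i hi => hf i (Set.mem_insert_of_mem _ hi))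

end Definability

section Types

variable {A : Type}

def Tp (A : Type) (m : ℕ) : ℕ → Type
  | 0 => (Fin m → A) × (Fin m → Fin m → Prop)
  | r + 1 => Tp A m r × (Fin m → Set (Tp A m r))

instance Tp.finite (A : Type) [Finite A] (m : ℕ) : ∀ r, Finite (Tp A m r)
  | 0 => by unfold Tp; infer_instance
  | r + 1 => by have := Tp.finite A m r; unfold Tp; infer_instance

/-- The Ehrenfeucht–Fraïssé type of rank `r` of the tuple of positions `v` in `w`. -/
def tp {m : ℕ} (w : ℕ → A) : (r : ℕ) → (Fin m → ℕ) → Tp A m r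
  | 0, v => (w ∘ v, fun i j => v i < v j)
  | r + 1, v => (tp w r v, fun d => Set.range fun x => tp w r (Function.update v d x))

theorem tp_zero_eq_of_tp_eq {m : ℕ} {w w' : ℕ → A} {v v' : Fin m → ℕ} :
    ∀ {r : ℕ}, tp w r v = tp w' r v' → tp w 0 v = tp w' 0 v'
  | 0, h => h
  | _ + 1, h => tp_zero_eq_of_tp_eq (congrArg Prod.fst h)

theorem interpInf_comp_iff_of_tp_eq {m : ℕ} {w w' : ℕ → A} (φ : Form A) (σ : ℕ → Fin m)
    (hm : φ.freeVars.card + φ.rank ≤ m) {r : ℕ} (hr : φ.rank ≤ r) {v v' : Fin m → ℕ}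
    (h : tp w r v = tp w' r v') : InterpInf w φ (v ∘ σ) ↔ InterpInf w' φ (v' ∘ σ) := by
  induction φ generalizing σ r v v' with
  | letter a i =>
    exact iff_of_eq <|
      congrArg (· = a) (congrFun (congrArg Prod.fst (tp_zero_eq_of_tp_eq h)) (σ i))
  | lt i j =>
    exact iff_of_eq <|
      congrFun (congrFun (congrArg Prod.snd (tp_zero_eq_of_tp_eq h)) (σ i)) (σ j)
  | not φ ih => exact not_congr (ih σ hm hr h)
  | and φ ψ ihφ ihψ =>
    simp only [Form.rank, Form.freeVars, max_le_iff] at hm hr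
    have hφ : φ.freeVars.card ≤ (φ.freeVars ∪ ψ.freeVars).card :=
      Finset.card_le_card Finset.subset_union_left
    have hψ : ψ.freeVars.card ≤ (φ.freeVars ∪ ψ.freeVars).card :=
      Finset.card_le_card Finset.subset_union_right
    exact and_congr (ihφ σ (by omega) hr.1 h) (ihψ σ (by omega) hr.2 h)
  | ex n φ ih =>
    obtain ⟨r, rfl⟩ : ∃ s, r = s + 1 :=
      Nat.exists_eq_add_of_le' (by simp only [Form.rank] at hr; omega)
    simp only [Form.rank, Form.freeVars] at hm hr
    have hcard := Finset.card_le_card_sdiff_add_card (s := φ.freeVars) (t := {n})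
    rw [Finset.card_singleton] at hcard
    have himage := Finset.card_image_le (s := φ.freeVars \ {n}) (f := σ)
    obtain ⟨d, -, hd⟩ := Finset.exists_mem_notMem_of_card_lt_card
      (s := (φ.freeVars \ {n}).image σ) (t := Finset.univ)
      (by rw [Finset.card_univ, Fintype.card_fin]; omega)
    -- the quantified variable moves to the free slot `d`
    have hslot : ∀ (u : Fin m → ℕ) (p : ℕ), ∀ i ∈ φ.freeVars,
        Function.update (u ∘ σ) n p i = (Function.update u d p ∘ Function.update σ n d) i := by
      intro u p i hi
      by_cases hin : i = n
      · simp [hin]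
      · have hσi : σ i ≠ d := fun h => hd (Finset.mem_image.mpr ⟨i, by simp [hi, hin], h⟩)
        simp [hin, hσi]
    simp only [InterpInf, interpInf_congr _ φ (hslot _ _)]
    exact exists_congr_of_range_eq (congrFun (congrArg Prod.snd h) d)
      fun p q hpq => ih _ (by omega) (by omega) hpq

-- One spare slot, so that `Fin (k + 1)` is inhabited even when `k = 0`.
theorem equivKInf_of_tp_eq {k : ℕ} {w w' : ℕ → A}
    (h : tp w k (fun _ : Fin (k + 1) => 0) = tp w' k (fun _ => 0)) : EquivKInf k w w' := by
  intro φ hφ hr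
  rw [hφ.modelsInf_iff w (fun _ => 0), hφ.modelsInf_iff w' (fun _ => 0)]
  exact interpInf_comp_iff_of_tp_eq φ (fun _ => 0)
    (by simp [show φ.freeVars = ∅ from hφ]; omega) hr h

end Types

section Partition

variable (A : Type) [Finite A] (k : ℕ)

def equivKInfSetoid : Setoid (ℕ → A) where
  r := EquivKInf k
  iseqv := ⟨fun _ _ _ _ => Iff.rfl, fun h φ hφ hr => (h φ hφ hr).symm,
    fun h h' φ hφ hr => (h φ hφ hr).trans (h' φ hφ hr)⟩

theorem finite_setOf_langOfInf_rank_le :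
    {L : Set (ℕ → A) | ∃ φ, IsSentence φ ∧ φ.rank ≤ k ∧ L = LangOfInf φ}.Finite := by
  refine finite_of_forall_saturated (fun w => tp w k (fun _ : Fin (k + 1) => 0)) ?_
  rintro _ ⟨φ, hφ, hr, rfl⟩ w w' h hw
  exact (equivKInf_of_tp_eq h φ hφ hr).mp hw

theorem finite_classes_equivKInfSetoid : (equivKInfSetoid A k).classes.Finite := by
  refine finite_of_forall_saturated (fun w => tp w k (fun _ : Fin (k + 1) => 0)) ?_
  rintro _ ⟨w₀, rfl⟩ w w' h (hw : EquivKInf k w w₀)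
  exact (equivKInfSetoid A k).trans ((equivKInfSetoid A k).symm (equivKInf_of_tp_eq h)) hw

theorem foDefinableInf_setOf_equivKInf (w₀ : ℕ → A) :
    FODefinableInf {w | EquivKInf k w w₀} := by
  have hclass : {w | EquivKInf k w w₀} =
      ⋂ L ∈ {L : Set (ℕ → A) | ∃ φ, IsSentence φ ∧ φ.rank ≤ k ∧ L = LangOfInf φ},
        {w | w ∈ L ↔ w₀ ∈ L} := by
    ext w
    simp only [Set.mem_ofPred_eq, Set.mem_iInter]
    constructor
    · rintro h _ ⟨φ, hφ, hr, rfl⟩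
      exact h φ hφ hr
    · intro h φ hφ hr
      exact h _ ⟨φ, hφ, hr, rfl⟩
  rw [hclass]
  refine FODefinableInf.biInter (finite_setOf_langOfInf_rank_le A k) ?_
  rintro _ ⟨φ, hφ, -, rfl⟩
  have hL : FODefinableInf (LangOfInf φ) := ⟨φ, hφ, rfl⟩
  by_cases hw₀ : w₀ ∈ LangOfInf φ
  · simpa [hw₀] using hL
  · simpa [hw₀, Set.compl_def] using hL.compl

theorem foPartInf_classes_equivKInfSetoid : FOPartInf (equivKInfSetoid A k).classes :=
  ⟨⟨finite_classes_equivKInfSetoid A k, (Setoid.isPartition_classes _).2⟩,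
    fun _ ⟨w₀, hw₀⟩ => hw₀ ▸ foDefinableInf_setOf_equivKInf A k w₀⟩

end Partition

theorem FOPartInf.exists_rank_le {A : Type} {P : Set (Set (ℕ → A))} (hP : FOPartInf P) :
    ∃ k, ∀ B ∈ P, ∃ φ, IsSentence φ ∧ φ.rank ≤ k ∧ B = LangOfInf φ := by
  have : Nonempty (Form A) := ⟨.lt 0 0⟩
  choose! φ hφ using hP.2
  obtain ⟨k, hk⟩ := (hP.1.1.image fun B => (φ B).rank).bddAbove
  exact ⟨k, fun B hB => ⟨φ B, (hφ B hB).1, hk ⟨B, hB, rfl⟩, (hφ B hB).2⟩⟩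

theorem stmt18_general {A Sinf : Type} [Fintype A]
    (α : (ℕ → A) → Sinf) (T : Set Sinf) :
    T ∈ optImprintFOInf α ↔
      ∀ k : ℕ, ∃ w : ℕ → A, T ⊆ α '' { w' | EquivKInf k w w' } := by
  constructor
  · intro hT k
    obtain ⟨_, ⟨w, rfl⟩, hTw⟩ := hT _ (foPartInf_classes_equivKInfSetoid A k)
    exact ⟨w, hTw.trans (Set.image_mono fun _ => (equivKInfSetoid A k).symm)⟩
  · intro hT P hP
    obtain ⟨k, hk⟩ := hP.exists_rank_le
    obtain ⟨w, hTw⟩ := hT k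
    obtain ⟨B, ⟨hBP, hwB⟩, -⟩ := hP.1.2 w
    obtain ⟨φ, hφ, hr, rfl⟩ := hk B hBP
    exact ⟨_, hBP, hTw.trans (Set.image_mono fun w' hw' => (hw' φ hφ hr).mp hwB)⟩

theorem stmt18 {A Sinf : Type} [Fintype A] [Fintype Sinf]
    (α : (ℕ → A) → Sinf) (T : Set Sinf) :
    T ∈ optImprintFOInf α ↔
      ∀ k : ℕ, ∃ w : ℕ → A, T ⊆ α '' { w' | EquivKInf k w w' } :=
  stmt18_general α T

end FOSep
end
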